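/- arXiv:2410.17508 — 6 statements merged into one kernel-verified Lean document; each statement's English description precedes it below -/
import Mathlib

section
/- Let G be a simple graph and let A1, A2 be 2-matchings in G. Then there exists a partition P of the symmetric difference A1 △ A2 into alternating trails with respect to (A1, A2) such that for each i ∈ {1,2} and each trail P in the partition, A_i △ P is again a 2-matching. -/
/-!
Induct on `|A1 △ A2|`. Take an alternating trail `P` whose edge set is maximal. At a vertex `v`,
the number of `A1`-edges of `P` minus the number of `A2`-edges of `P` only depends on how `P`
starts and ends at `v`, since every inner passage through `v` uses one edge of each kind. So
flipping `P` can raise the `A1`-degree of `v` only if `P` ends at `v` with an `A2`-edge; then no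
edge of `A1 \ A2` at `v` can extend `P`, so all of them lie on `P`, and after the flip every edge
at `v` belongs to `A2`. Recursing on the pair `(A1 △ P, A2)`, whose symmetric difference is
`(A1 △ A2) \ P`, gives the remaining trails `Q`, and the same end argument, now with the roles of
`A1` and `A2` exchanged, shows that `A1 △ Q` is a 2-matching whenever `(A1 △ P) △ Q` is one.
-/

open Finset

variable {V : Type*} [DecidableEq V]

/-- Degree of `v` in the edge set `F`; self-loops count twice. -/
def degE (F : Finset (Sym2 V)) (v : V) : ℕ :=
  ∑ e ∈ F, (if e = s(v, v) then 2 else if v ∈ e then 1 else 0)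

/-- `M` is a 2-matching in the graph with edge set `E`. -/
def IsTwoMatching (E M : Finset (Sym2 V)) : Prop :=
  M ⊆ E ∧ ∀ v : V, degE M v ≤ 2

/-- An edge set forming a cycle of length 3. -/
def IsTriangle (T : Finset (Sym2 V)) : Prop :=
  ∃ a b c : V, a ≠ b ∧ b ≠ c ∧ a ≠ c ∧ T = {s(a, b), s(b, c), s(c, a)}

def TriangleFree (M : Finset (Sym2 V)) : Prop :=
  ∀ T : Finset (Sym2 V), IsTriangle T → ¬ T ⊆ M

/-- `𝒯`-freeness: `M` contains no triangle of the list `𝒯`. -/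
def TFree (𝒯 : Set (Finset (Sym2 V))) (M : Finset (Sym2 V)) : Prop :=
  ∀ T ∈ 𝒯, ¬ T ⊆ M

/-- Symmetric difference of edge sets. -/
def symmDiffE (A B : Finset (Sym2 V)) : Finset (Sym2 V) := (A \ B) ∪ (B \ A)

/-- The list of consecutive edges of the vertex sequence `vs`. -/
def trailEdges (vs : List V) : List (Sym2 V) :=
  List.zipWith (fun a b => s(a, b)) vs vs.tail

/-- The edge set of the vertex sequence `vs`. -/
def edgesOf (vs : List V) : Finset (Sym2 V) := (trailEdges vs).toFinset

/-- `vs` is a trail (a sequence of distinct consecutive edges) in edge set `E`. -/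
def IsTrailIn (E : Finset (Sym2 V)) (vs : List V) : Prop :=
  (trailEdges vs).Nodup ∧ ∀ e ∈ trailEdges vs, e ∈ E

/-- `vs` is a trail alternately traversing edges of `A1 \ A2` and `A2 \ A1`. -/
def IsAltTrail (A1 A2 : Finset (Sym2 V)) (vs : List V) : Prop :=
  (trailEdges vs).Nodup ∧
  (∀ e ∈ trailEdges vs, (e ∈ A1 ∧ e ∉ A2) ∨ (e ∈ A2 ∧ e ∉ A1)) ∧
  (trailEdges vs).Chain' (fun e f => e ∈ A1 ↔ f ∈ A2)

/-- `Ps` is a partition of `A1 △ A2` into (nonempty) alternating trails w.r.t. `(A1, A2)`. -/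
def IsAltTrailPartition (A1 A2 : Finset (Sym2 V)) (Ps : Finset (List V)) : Prop :=
  (∀ p ∈ Ps, IsAltTrail A1 A2 p ∧ trailEdges p ≠ []) ∧
  (∀ p ∈ Ps, ∀ q ∈ Ps, p ≠ q → Disjoint (edgesOf p) (edgesOf q)) ∧
  Ps.biUnion edgesOf = symmDiffE A1 A2

open scoped symmDiff

lemma symmDiffE_eq_symmDiff (A B : Finset (Sym2 V)) : symmDiffE A B = A ∆ B := rfl

lemma symmDiff_symmDiff_eq_sdiff {α : Type*} [GeneralizedBooleanAlgebra α] {a b p : α}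
    (hp : p ≤ a ∆ b) : a ∆ p ∆ b = a ∆ b \ p := by
  rw [symmDiff_right_comm, symmDiff_of_ge hp]

def incidence (v : V) (e : Sym2 V) : ℕ :=
  if e = s(v, v) then 2 else if v ∈ e then 1 else 0

lemma degE_eq_sum_incidence (F : Finset (Sym2 V)) (v : V) :
    degE F v = ∑ e ∈ F, incidence v e := rfl

lemma incidence_mk (v a b : V) :
    incidence v s(a, b) = (if v = a then 1 else 0) + (if v = b then 1 else 0) := by
  unfold incidence
  by_cases ha : v = a <;> by_cases hb : v = b <;> simp_all [eq_comm]

lemma incidence_eq_zero {v : V} {e : Sym2 V} (h : v ∉ e) : incidence v e = 0 := by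
  induction e using Sym2.ind with
  | _ a b => simp_all [incidence_mk]

lemma degE_le_degE_of_incident {F G : Finset (Sym2 V)} {v : V}
    (h : ∀ e ∈ F, v ∈ e → e ∈ G) : degE F v ≤ degE G v := calc
  degE F v = ∑ e ∈ F with v ∈ e, incidence v e :=
    (sum_filter_of_ne fun e _ he => by_contra (he ∘ incidence_eq_zero)).symm
  _ ≤ degE G v := sum_le_sum_of_subset_of_nonneg
    (fun e he => by rw [mem_filter] at he; exact h e he.1 he.2) (fun _ _ _ => Nat.zero_le _)

lemma degE_symmDiff_add (A X : Finset (Sym2 V)) (v : V) :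
    degE (A ∆ X) v + degE (X ∩ A) v = degE A v + degE (X \ A) v := by
  simp only [degE_eq_sum_incidence]
  rw [symmDiff_def, sup_eq_union, sum_union (disjoint_sdiff_sdiff (x := A)),
    ← sum_inter_add_sum_sdiff A X, inter_comm X A]
  ring

def edgeSign (A1 A2 : Finset (Sym2 V)) (e : Sym2 V) : ℤ :=
  (if e ∈ A1 then 1 else 0) - (if e ∈ A2 then 1 else 0)

lemma sum_edgeSign_mul_incidence (A1 A2 F : Finset (Sym2 V)) (v : V) :
    ∑ e ∈ F, edgeSign A1 A2 e * incidence v e = degE (F ∩ A1) v - degE (F ∩ A2) v := by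
  simp only [edgeSign, sub_mul, ite_mul, one_mul, zero_mul, sum_sub_distrib, sum_ite_mem,
    degE_eq_sum_incidence]
  push_cast
  rfl

lemma edgeSign_add_edgeSign_eq_zero {A1 A2 : Finset (Sym2 V)} {e f : Sym2 V}
    (he : e ∈ A1 ∆ A2) (hf : f ∈ A1 ∆ A2) (hef : e ∈ A1 ↔ f ∈ A2) :
    edgeSign A1 A2 e + edgeSign A1 A2 f = 0 := by
  rw [mem_symmDiff] at he hf
  unfold edgeSign
  split_ifs <;> simp_all

@[simp] lemma trailEdges_cons_cons {α : Type*} (a b : α) (t : List α) :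
    trailEdges (a :: b :: t) = s(a, b) :: trailEdges (b :: t) := rfl

@[simp] lemma trailEdges_singleton {α : Type*} (a : α) : trailEdges [a] = [] := rfl

lemma trailEdges_append_pair {α : Type*} : ∀ (l : List α) (a b : α),
    trailEdges (l ++ [a, b]) = trailEdges (l ++ [a]) ++ [s(a, b)]
  | [], _, _ => rfl
  | [_], _, _ => rfl
  | x :: y :: l, a, b => by
    have ih := trailEdges_append_pair (y :: l) a b
    simp only [List.cons_append, trailEdges_cons_cons] at ih ⊢
    rw [ih]

lemma trailEdges_reverse {α : Type*} :
    ∀ vs : List α, trailEdges vs.reverse = (trailEdges vs).reverse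
  | [] => rfl
  | [_] => rfl
  | a :: b :: t => by
    rw [List.reverse_cons, List.reverse_cons, List.append_assoc, List.singleton_append,
      trailEdges_append_pair, ← List.reverse_cons, trailEdges_reverse (b :: t),
      trailEdges_cons_cons, List.reverse_cons, Sym2.eq_swap]

lemma edgesOf_reverse (vs : List V) : edgesOf vs.reverse = edgesOf vs := by
  simp [edgesOf, trailEdges_reverse]

lemma IsAltTrail.of_iff {α : Type*} {A1 A2 B : Finset (Sym2 α)} {vs : List α}
    (h : IsAltTrail B A2 vs) (hB : ∀ e ∈ trailEdges vs, e ∈ B ↔ e ∈ A1) : IsAltTrail A1 A2 vs :=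
  ⟨h.1, fun e he => by rw [← hB e he]; exact h.2.1 e he,
    h.2.2.imp_of_mem_imp fun e _ he _ hef => (hB e he).symm.trans hef⟩

lemma IsAltTrail.of_cons {α : Type*} {A1 A2 : Finset (Sym2 α)} {a b : α} {t : List α}
    (h : IsAltTrail A1 A2 (a :: b :: t)) : IsAltTrail A1 A2 (b :: t) := by
  rw [IsAltTrail, trailEdges_cons_cons] at h
  exact ⟨h.1.of_cons, fun e he => h.2.1 e (List.mem_cons_of_mem _ he), h.2.2.tail⟩

section AltTrail

variable {A1 A2 : Finset (Sym2 V)} {vs : List V}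

lemma IsAltTrail.mem_symmDiff (h : IsAltTrail A1 A2 vs) {e : Sym2 V} (he : e ∈ trailEdges vs) :
    e ∈ A1 ∆ A2 :=
  Finset.mem_symmDiff.2 (h.2.1 e he)

lemma IsAltTrail.edgesOf_subset (h : IsAltTrail A1 A2 vs) : edgesOf vs ⊆ A1 ∆ A2 :=
  fun _ he => h.mem_symmDiff (List.mem_toFinset.1 he)

lemma IsAltTrail.swap (h : IsAltTrail A1 A2 vs) : IsAltTrail A2 A1 vs := by
  refine ⟨h.1, fun e he => (h.2.1 e he).symm, h.2.2.imp_of_mem_imp fun e f he hf hef => ?_⟩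
  have := h.2.1 e he
  have := h.2.1 f hf
  tauto

lemma IsAltTrail.reverse (h : IsAltTrail A1 A2 vs) : IsAltTrail A1 A2 vs.reverse := by
  refine ⟨?_, ?_, ?_⟩
  · rw [trailEdges_reverse, List.nodup_reverse]
    exact h.1
  · simpa only [trailEdges_reverse, List.mem_reverse] using h.2.1
  · show List.IsChain _ _
    rw [trailEdges_reverse, List.isChain_reverse]
    exact h.swap.2.2.imp fun _ _ => Iff.symm

def startSign (A1 A2 : Finset (Sym2 V)) (v : V) : List V → ℤ
  | a :: b :: _ => if v = a then edgeSign A1 A2 s(a, b) else 0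
  | _ => 0

@[simp] lemma startSign_cons_cons (v a b : V) (t : List V) :
    startSign A1 A2 v (a :: b :: t) = if v = a then edgeSign A1 A2 s(a, b) else 0 := rfl

lemma startSign_append (v : V) : ∀ {l : List V} (l' : List V), 2 ≤ l.length →
    startSign A1 A2 v (l ++ l') = startSign A1 A2 v l
  | _ :: _ :: _, _, _ => rfl

/-- Along an alternating trail the signs cancel at every inner passage through `v`; only the
two ends remain. -/
lemma IsAltTrail.sum_edgeSign_mul_incidence (v : V) : ∀ {vs : List V}, IsAltTrail A1 A2 vs →
    ((trailEdges vs).map fun e => edgeSign A1 A2 e * incidence v e).sum =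
      startSign A1 A2 v vs + startSign A1 A2 v vs.reverse
  | [], _ => rfl
  | [_], _ => rfl
  | [a, b], _ => by
    simp only [trailEdges_cons_cons, trailEdges_singleton, List.map_cons, List.map_nil,
      List.sum_cons, List.sum_nil, List.reverse_cons, List.reverse_nil, List.nil_append,
      List.cons_append, startSign_cons_cons, Sym2.eq_swap (a := b), incidence_mk]
    split_ifs <;> push_cast <;> ring
  | a :: b :: c :: t, h => by
    have hsign := edgeSign_add_edgeSign_eq_zero (h.mem_symmDiff (e := s(a, b)) (by simp))
      (h.mem_symmDiff (e := s(b, c)) (by simp)) (List.isChain_cons_cons.1 h.2.2).1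
    rw [trailEdges_cons_cons, List.map_cons, List.sum_cons,
      h.of_cons.sum_edgeSign_mul_incidence v, List.reverse_cons (a := a),
      startSign_append _ _ (by simp)]
    simp only [startSign_cons_cons, incidence_mk]
    split_ifs <;> push_cast <;> linarith

end AltTrail

lemma sdiff_eq_inter_of_subset_symmDiff {α : Type*} [DecidableEq α] {A B P : Finset α}
    (hP : P ⊆ A ∆ B) : P \ A = P ∩ B := by
  ext e
  have := fun he : e ∈ P => mem_symmDiff.1 (hP he)
  simp only [mem_sdiff, mem_inter]
  tauto

def IsMaximalAltTrail (A1 A2 : Finset (Sym2 V)) (vs : List V) : Prop :=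
  IsAltTrail A1 A2 vs ∧
    ∀ ws, IsAltTrail A1 A2 ws → edgesOf vs ⊆ edgesOf ws → edgesOf ws ⊆ edgesOf vs

section MaximalAltTrail

variable {A1 A2 : Finset (Sym2 V)} {vs : List V}

lemma exists_isMaximalAltTrail {e : Sym2 V} (he : e ∈ A1 ∆ A2) :
    ∃ vs, IsMaximalAltTrail A1 A2 vs ∧ e ∈ edgesOf vs := by
  induction e using Sym2.ind with | _ x y => ?_
  let S : Set (Finset (Sym2 V)) := {F | ∃ ws, IsAltTrail A1 A2 ws ∧ edgesOf ws = F}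
  have hS : S.Finite := (A1 ∆ A2).powerset.finite_toSet.subset fun F ⟨ws, hws, hF⟩ => by
    rw [mem_coe, mem_powerset, ← hF]
    exact hws.edgesOf_subset
  have hxy : IsAltTrail A1 A2 [x, y] :=
    ⟨List.nodup_singleton _, by simpa [mem_symmDiff] using he, List.isChain_singleton _⟩
  obtain ⟨F, hle, ⟨vs, hvs, rfl⟩, hmax⟩ :=
    hS.exists_le_maximal (a := edgesOf [x, y]) ⟨_, hxy, rfl⟩
  exact ⟨vs, ⟨hvs, fun ws hws hsub => hmax ⟨ws, hws, rfl⟩ hsub⟩, hle (by simp [edgesOf])⟩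

lemma IsMaximalAltTrail.swap (h : IsMaximalAltTrail A1 A2 vs) : IsMaximalAltTrail A2 A1 vs :=
  ⟨h.1.swap, fun ws hws => h.2 ws hws.swap⟩

lemma IsMaximalAltTrail.reverse (h : IsMaximalAltTrail A1 A2 vs) :
    IsMaximalAltTrail A1 A2 vs.reverse :=
  ⟨h.1.reverse, fun ws hws => by rw [edgesOf_reverse]; exact h.2 ws hws⟩

/-- If the trail starts at `v` with an edge of `A2`, any edge of `A1 \ A2` at `v` could be
prepended to it, so by maximality it already lies on it. -/
lemma IsMaximalAltTrail.mem_edgesOf_of_startSign_neg (h : IsMaximalAltTrail A1 A2 vs) {v : V}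
    (hv : startSign A1 A2 v vs < 0) {g : Sym2 V} (hg : g ∈ A1 \ A2) (hvg : v ∈ g) :
    g ∈ edgesOf vs := by
  match vs, h, hv with
  | [], _, hv | [_], _, hv => exact absurd hv (lt_irrefl 0)
  | a :: b :: t, h, hv =>
    obtain rfl : v = a := by_contra fun hva => by simp [hva] at hv
    rw [startSign_cons_cons, if_pos rfl] at hv
    have hab : s(v, b) ∈ A2 := by
      unfold edgeSign at hv
      split_ifs at hv <;> simp_all
    obtain ⟨w, rfl⟩ := Sym2.mem_iff_exists.1 hvg
    by_contra hg'
    have hext : IsAltTrail A1 A2 (w :: v :: b :: t) := by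
      refine ⟨?_, ?_, ?_⟩
      · rw [trailEdges_cons_cons, Sym2.eq_swap]
        exact List.nodup_cons.2 ⟨fun hmem => hg' (List.mem_toFinset.2 hmem), h.1.1⟩
      · rw [trailEdges_cons_cons, List.forall_mem_cons, Sym2.eq_swap]
        exact ⟨Or.inl (mem_sdiff.1 hg), h.1.2.1⟩
      · rw [trailEdges_cons_cons, Sym2.eq_swap]
        exact List.isChain_cons_cons.2 ⟨⟨fun _ => hab, fun _ => (mem_sdiff.1 hg).1⟩, h.1.2.2⟩
    refine hg' (h.2 _ hext ?_ ?_) <;>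
      simp [edgesOf, Sym2.eq_swap]

lemma IsMaximalAltTrail.mem_edgesOf_of_degE_lt (h : IsMaximalAltTrail A1 A2 vs) {v : V}
    (hv : degE (edgesOf vs ∩ A1) v < degE (edgesOf vs ∩ A2) v) {g : Sym2 V} (hg : g ∈ A1 \ A2)
    (hvg : v ∈ g) : g ∈ edgesOf vs := by
  have hsum : startSign A1 A2 v vs + startSign A1 A2 v vs.reverse < 0 := by
    rw [← h.1.sum_edgeSign_mul_incidence v, ← List.sum_toFinset _ h.1.1]
    change ∑ e ∈ edgesOf vs, edgeSign A1 A2 e * incidence v e < 0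
    rw [sum_edgeSign_mul_incidence, sub_neg]
    exact_mod_cast hv
  by_cases hs : startSign A1 A2 v vs < 0
  · exact h.mem_edgesOf_of_startSign_neg hs hg hvg
  · rw [← edgesOf_reverse]
    exact h.reverse.mem_edgesOf_of_startSign_neg (by linarith) hg hvg

lemma IsMaximalAltTrail.degE_symmDiff_le_two (h : IsMaximalAltTrail A1 A2 vs)
    (hA1 : ∀ v, degE A1 v ≤ 2) (hA2 : ∀ v, degE A2 v ≤ 2) (v : V) :
    degE (A1 ∆ edgesOf vs) v ≤ 2 := by
  have hP := h.1.edgesOf_subset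
  have key := degE_symmDiff_add A1 (edgesOf vs) v
  rw [sdiff_eq_inter_of_subset_symmDiff hP] at key
  by_cases hlt : degE (edgesOf vs ∩ A1) v < degE (edgesOf vs ∩ A2) v
  · refine (degE_le_degE_of_incident fun e he hve => ?_).trans (hA2 v)
    rcases mem_symmDiff.1 he with ⟨he1, heP⟩ | ⟨heP, he1⟩
    · by_contra he2
      exact heP (h.mem_edgesOf_of_degE_lt hlt (mem_sdiff.2 ⟨he1, he2⟩) hve)
    · exact ((mem_symmDiff.1 (hP heP)).resolve_left fun h' => he1 h'.1).1
  · have := hA1 v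
    omega

lemma IsMaximalAltTrail.degE_symmDiff_le_two_of_disjoint (h : IsMaximalAltTrail A1 A2 vs)
    (hA1 : ∀ v, degE A1 v ≤ 2) {Q : Finset (Sym2 V)} (hQ : Q ⊆ A1 ∆ A2)
    (hQP : Disjoint Q (edgesOf vs)) {v : V} (hv : degE (A1 ∆ edgesOf vs ∆ Q) v ≤ 2) :
    degE (A1 ∆ Q) v ≤ 2 := by
  have hP := h.1.edgesOf_subset
  have key := degE_symmDiff_add (A1 ∆ Q) (edgesOf vs) v
  have hinter : edgesOf vs ∩ (A1 ∆ Q) = edgesOf vs ∩ A1 := by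
    ext e
    have := fun he : e ∈ Q => disjoint_left.1 hQP he
    simp only [mem_inter, mem_symmDiff]
    tauto
  have hsdiff : edgesOf vs \ (A1 ∆ Q) = edgesOf vs ∩ A2 := by
    rw [← sdiff_eq_inter_of_subset_symmDiff hP]
    ext e
    have := fun he : e ∈ Q => disjoint_left.1 hQP he
    simp only [mem_sdiff, mem_symmDiff]
    tauto
  rw [hinter, hsdiff, symmDiff_right_comm] at key
  by_cases hlt : degE (edgesOf vs ∩ A2) v < degE (edgesOf vs ∩ A1) v
  · refine (degE_le_degE_of_incident fun e he hve => ?_).trans (hA1 v)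
    rcases mem_symmDiff.1 he with ⟨he1, _⟩ | ⟨heQ, he1⟩
    · exact he1
    · have he2 : e ∈ A2 \ A1 := mem_sdiff.2 ⟨((mem_symmDiff.1 (hQ heQ)).resolve_left
        fun h' => he1 h'.1).1, he1⟩
      exact absurd (h.swap.mem_edgesOf_of_degE_lt hlt he2 hve) (disjoint_left.1 hQP heQ)
  · omega

end MaximalAltTrail

lemma isTwoMatching_symmDiffE {E A P : Finset (Sym2 V)} (hA : A ⊆ E) (hP : P ⊆ E)
    (hdeg : ∀ v, degE (A ∆ P) v ≤ 2) : IsTwoMatching E (symmDiffE A P) :=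
  ⟨symmDiff_le_sup.trans (union_subset hA hP), hdeg⟩

section Partition

variable {A1 A2 : Finset (Sym2 V)} {vs : List V} {Ps : Finset (List V)}

lemma IsAltTrailPartition.edgesOf_subset_sdiff
    (hPs : IsAltTrailPartition (A1 ∆ edgesOf vs) A2 Ps) (hP : edgesOf vs ⊆ A1 ∆ A2)
    {q : List V} (hq : q ∈ Ps) :
    edgesOf q ⊆ A1 ∆ A2 \ edgesOf vs :=
  symmDiff_symmDiff_eq_sdiff hP ▸ (hPs.1 q hq).1.edgesOf_subset

lemma IsAltTrailPartition.insert (hvs : IsAltTrail A1 A2 vs) (hne : trailEdges vs ≠ [])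
    (hPs : IsAltTrailPartition (A1 ∆ edgesOf vs) A2 Ps) :
    IsAltTrailPartition A1 A2 (insert vs Ps) := by
  have hP := hvs.edgesOf_subset
  have hdisj : ∀ q ∈ Ps, Disjoint (edgesOf q) (edgesOf vs) := fun q hq =>
    disjoint_of_subset_left (hPs.edgesOf_subset_sdiff hP hq) sdiff_disjoint
  refine ⟨?_, ?_, ?_⟩
  · simp only [mem_insert, forall_eq_or_imp]
    refine ⟨⟨hvs, hne⟩, fun q hq => ⟨(hPs.1 q hq).1.of_iff fun e he => ?_, (hPs.1 q hq).2⟩⟩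
    have : e ∉ edgesOf vs := disjoint_left.1 (hdisj q hq) (List.mem_toFinset.2 he)
    simp [mem_symmDiff, this]
  · simp only [mem_insert]
    rintro p (rfl | hp) q (rfl | hq) hpq
    · exact absurd rfl hpq
    · exact (hdisj q hq).symm
    · exact hdisj p hp
    · exact hPs.2.1 p hp q hq hpq
  · rw [biUnion_insert, hPs.2.2, symmDiffE_eq_symmDiff, symmDiffE_eq_symmDiff,
      symmDiff_symmDiff_eq_sdiff hP, union_sdiff_of_subset hP]

end Partition

theorem stmt_0_general (E : Finset (Sym2 V))
    (A1 A2 : Finset (Sym2 V))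
    (h1 : IsTwoMatching E A1) (h2 : IsTwoMatching E A2) :
    ∃ Ps : Finset (List V), IsAltTrailPartition A1 A2 Ps ∧
      ∀ p ∈ Ps, IsTwoMatching E (symmDiffE A1 (edgesOf p)) ∧
        IsTwoMatching E (symmDiffE A2 (edgesOf p)) := by
  induction hn : (symmDiffE A1 A2).card using Nat.strong_induction_on generalizing A1 with
  | _ n ih => ?_
  obtain hD | ⟨e, he⟩ := (A1 ∆ A2).eq_empty_or_nonempty
  · exact ⟨∅, ⟨by simp, by simp, by simp [symmDiffE_eq_symmDiff, hD]⟩, by simp⟩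
  obtain ⟨vs, hvs, hevs⟩ := exists_isMaximalAltTrail he
  have hDE : A1 ∆ A2 ⊆ E := symmDiff_le_sup.trans (union_subset h1.1 h2.1)
  have hP := hvs.1.edgesOf_subset
  have hA1P : IsTwoMatching E (symmDiffE A1 (edgesOf vs)) :=
    isTwoMatching_symmDiffE h1.1 (hP.trans hDE) (hvs.degE_symmDiff_le_two h1.2 h2.2)
  have hcard : (symmDiffE (symmDiffE A1 (edgesOf vs)) A2).card < n := by
    rw [← hn, symmDiffE_eq_symmDiff, symmDiffE_eq_symmDiff, symmDiffE_eq_symmDiff,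
      symmDiff_symmDiff_eq_sdiff hP]
    exact card_lt_card (sdiff_ssubset hP ⟨e, hevs⟩)
  obtain ⟨Ps, hPs, hPsM⟩ := ih _ hcard _ hA1P rfl
  refine ⟨insert vs Ps, hPs.insert hvs.1 fun h => by simp [edgesOf, h] at hevs, ?_⟩
  simp only [mem_insert, forall_eq_or_imp]
  refine ⟨⟨hA1P, isTwoMatching_symmDiffE h2.1 (hP.trans hDE)
    (hvs.swap.degE_symmDiff_le_two h2.2 h1.2)⟩, fun q hq => ?_⟩
  have hqP := hPs.edgesOf_subset_sdiff hP hq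
  exact ⟨isTwoMatching_symmDiffE h1.1 (hqP.trans (sdiff_subset.trans hDE)) fun v =>
    hvs.degE_symmDiff_le_two_of_disjoint h1.2 (hqP.trans sdiff_subset)
      (disjoint_of_subset_left hqP sdiff_disjoint) ((hPsM q hq).1.2 v), (hPsM q hq).2⟩

/-- decomposition of the symmetric difference of two 2-matchings
in a simple graph into alternating trails preserving the 2-matching property. -/
theorem stmt_0 (E : Finset (Sym2 V)) (hE : ∀ e ∈ E, ¬ e.IsDiag)
    (A1 A2 : Finset (Sym2 V))
    (h1 : IsTwoMatching E A1) (h2 : IsTwoMatching E A2) :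
    ∃ Ps : Finset (List V), IsAltTrailPartition A1 A2 Ps ∧
      ∀ p ∈ Ps, IsTwoMatching E (symmDiffE A1 (edgesOf p)) ∧
        IsTwoMatching E (symmDiffE A2 (edgesOf p)) :=
  stmt_0_general E A1 A2 h1 h2
end

section
/- Let A1, A2 be 2-matchings in a graph G and let P be an alternating trail with respect to (A1, A2) contained in A1 △ A2. If for every vertex v we have d_{A1∩P}(v) = d_{A2∩P}(v), then both A1 △ P and A2 △ P are 2-matchings. -/
open Finset

variable {V : Type*} [DecidableEq V]

theorem symmDiffE_comm (A B : Finset (Sym2 V)) : symmDiffE A B = symmDiffE B A :=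
  union_comm _ _

theorem degE_union_of_disjoint {S T : Finset (Sym2 V)} (h : Disjoint S T) (v : V) :
    degE (S ∪ T) v = degE S v + degE T v :=
  sum_union h

theorem degE_inter_add_degE_sdiff (A P : Finset (Sym2 V)) (v : V) :
    degE (A ∩ P) v + degE (A \ P) v = degE A v :=
  sum_inter_add_sum_sdiff A P _

theorem degE_symmDiffE_add_degE_inter (A P : Finset (Sym2 V)) (v : V) :
    degE (symmDiffE A P) v + degE (A ∩ P) v = degE A v + degE (P \ A) v := by
  rw [symmDiffE, degE_union_of_disjoint disjoint_sdiff_sdiff, ← degE_inter_add_degE_sdiff A P v]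
  ring

theorem sdiff_eq_inter_of_subset_symmDiffE {A B P : Finset (Sym2 V)}
    (hP : P ⊆ symmDiffE A B) : P \ A = B ∩ P := by
  ext e
  have := @hP e
  simp only [symmDiffE, mem_union, mem_sdiff, mem_inter] at this ⊢
  tauto

/-- Flipping along `P ⊆ A △ B` trades the `A`-edges of `P` for its `B`-edges, so a balanced `P`
leaves every degree of `A` unchanged. -/
theorem IsTwoMatching.symmDiffE_of_balanced {E A B P : Finset (Sym2 V)}
    (hA : IsTwoMatching E A) (hB : IsTwoMatching E B) (hP : P ⊆ symmDiffE A B)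
    (hbal : ∀ v, degE (A ∩ P) v = degE (B ∩ P) v) :
    IsTwoMatching E (symmDiffE A P) := by
  have hPA : P \ A = B ∩ P := sdiff_eq_inter_of_subset_symmDiffE hP
  refine ⟨union_subset (sdiff_subset.trans hA.1) ?_, fun v => ?_⟩
  · rw [hPA]
    exact inter_subset_left.trans hB.1
  · have hdeg := degE_symmDiffE_add_degE_inter A P v
    rw [hPA, ← hbal v] at hdeg
    have := hA.2 v
    omega

theorem stmt_5_general (E : Finset (Sym2 V)) (A1 A2 : Finset (Sym2 V))
    (h1 : IsTwoMatching E A1) (h2 : IsTwoMatching E A2)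
    (p : List V)
    (hsub : edgesOf p ⊆ symmDiffE A1 A2)
    (hbal : ∀ v : V, degE (A1 ∩ edgesOf p) v = degE (A2 ∩ edgesOf p) v) :
    IsTwoMatching E (symmDiffE A1 (edgesOf p)) ∧
    IsTwoMatching E (symmDiffE A2 (edgesOf p)) := by
  exact ⟨h1.symmDiffE_of_balanced h2 hsub hbal,
    h2.symmDiffE_of_balanced h1 (symmDiffE_comm A1 A2 ▸ hsub) fun v => (hbal v).symm⟩

/-- if an alternating trail `p ⊆ A1 △ A2` is degree-balanced at every
vertex, then both `A1 △ p` and `A2 △ p` are 2-matchings. -/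
theorem stmt_5 (E : Finset (Sym2 V)) (A1 A2 : Finset (Sym2 V))
    (h1 : IsTwoMatching E A1) (h2 : IsTwoMatching E A2)
    (p : List V) (hp : IsAltTrail A1 A2 p)
    (hsub : edgesOf p ⊆ symmDiffE A1 A2)
    (hbal : ∀ v : V, degE (A1 ∩ edgesOf p) v = degE (A2 ∩ edgesOf p) v) :
    IsTwoMatching E (symmDiffE A1 (edgesOf p)) ∧
    IsTwoMatching E (symmDiffE A2 (edgesOf p)) :=
  stmt_5_general E A1 A2 h1 h2 p hsub hbal
end

section
/- Let G be a simple graph, let OPT be a triangle-free 2-matching of maximum cardinality in G, and let APX be any triangle-free 2-matching. Suppose there is a partition P of OPT △ APX into alternating trails with respect to (OPT, APX) such that both OPT △ P and APX △ P are triangle-free 2-matchings for every P in the partition. Then the number of trails P in the partition with |APX △ P| = |APX| + 1 is exactly |OPT| − |APX|. -/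
/-!
Write `a(P) = |P ∩ OPT|` and `b(P) = |P ∩ APX|` for a trail `P` of the partition. Since `P` lies
in `OPT △ APX`, `|APX △ P| = |APX| + a(P) - b(P)` and `|OPT △ P| = |OPT| - a(P) + b(P)`.
Maximality of `OPT` gives `b(P) ≤ a(P)` and alternation gives `a(P) ≤ b(P) + 1`, so the trails
with `|APX △ P| = |APX| + 1` are exactly those with `a(P) = b(P) + 1`, and their number is
`∑ (a(P) - b(P)) = |OPT \ APX| - |APX \ OPT| = |OPT| - |APX|`.
-/

open Finset

variable {V : Type*} [DecidableEq V]

theorem List.countP_le_countP_add_one_of_chain {α : Type*} (p q : α → Bool) :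
    ∀ l : List α, (∀ x ∈ l, p x = !q x) → l.IsChain (fun x y => p x = q y) →
      l.countP p ≤ l.countP q + 1
  | [], _, _ => by simp
  | [x], hpq, _ => by
    have hx := hpq x (by simp)
    cases hqx : q x <;> simp_all
  | x :: y :: l, hpq, hc => by
    have ih := countP_le_countP_add_one_of_chain p q l (fun z hz => hpq z (by simp [hz]))
      (List.isChain_cons_cons.mp hc).2.tail
    have hxy := (List.isChain_cons_cons.mp hc).1
    have hx := hpq x (by simp)
    have hy := hpq y (by simp)
    simp only [List.countP_cons]
    cases hpx : p x <;> cases hpy : p y <;> simp_all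

theorem card_symmDiffE_add_card_inter_of_subset (A B P : Finset (Sym2 V))
    (hP : P ⊆ symmDiffE A B) :
    (symmDiffE A P).card + (P ∩ A).card = A.card + (P ∩ B).card := by
  have hPB : P \ A = P ∩ B := by
    ext e
    have := @hP e
    simp only [symmDiffE, mem_union, mem_sdiff] at this
    simp only [mem_sdiff, mem_inter]
    tauto
  rw [symmDiffE, card_union_of_disjoint disjoint_sdiff_sdiff, ← hPB, inter_comm,
    ← card_sdiff_add_card_inter A P]
  omega

theorem symmDiffE_inter_left (A B : Finset (Sym2 V)) : symmDiffE A B ∩ A = A \ B := by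
  ext e
  simp only [symmDiffE, mem_inter, mem_union, mem_sdiff]
  tauto

theorem IsAltTrail.card_inter_le_add_one {A1 A2 : Finset (Sym2 V)} {vs : List V}
    (h : IsAltTrail A1 A2 vs) : (edgesOf vs ∩ A1).card ≤ (edgesOf vs ∩ A2).card + 1 := by
  obtain ⟨hnd, hmem, hchain⟩ := h
  simp only [edgesOf, ← filter_mem_eq_inter, hnd.card_eq_countP]
  refine List.countP_le_countP_add_one_of_chain _ _ _ (fun e he => ?_)
    (hchain.imp fun _ _ h => decide_eq_decide.mpr h)
  rcases hmem e he with ⟨h1, h2⟩ | ⟨h1, h2⟩ <;> simp [h1, h2]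

theorem IsAltTrailPartition.sum_card_inter {A1 A2 : Finset (Sym2 V)} {Ps : Finset (List V)}
    (hPs : IsAltTrailPartition A1 A2 Ps) (D : Finset (Sym2 V)) :
    ∑ p ∈ Ps, (edgesOf p ∩ D).card = (symmDiffE A1 A2 ∩ D).card := by
  rw [← hPs.2.2, biUnion_inter, card_biUnion]
  exact fun p hp q hq hpq => (hPs.2.1 p hp q hq hpq).mono inf_le_left inf_le_left

theorem Finset.card_filter_eq_add_one_add_sum {ι : Type*} (s : Finset ι) (f g : ι → ℕ)
    (hgf : ∀ i ∈ s, g i ≤ f i) (hfg : ∀ i ∈ s, f i ≤ g i + 1) :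
    (s.filter fun i => f i = g i + 1).card + ∑ i ∈ s, g i = ∑ i ∈ s, f i := by
  rw [card_filter, ← sum_add_distrib]
  refine sum_congr rfl fun i hi => ?_
  have := hgf i hi
  have := hfg i hi
  split_ifs <;> omega

theorem stmt_7_general (E : Finset (Sym2 V))
    (OPT APX : Finset (Sym2 V))
    (hmax : ∀ M : Finset (Sym2 V), IsTwoMatching E M → TriangleFree M → M.card ≤ OPT.card)
    (Ps : Finset (List V)) (hPs : IsAltTrailPartition OPT APX Ps)
    (hgood : ∀ p ∈ Ps,
      (IsTwoMatching E (symmDiffE OPT (edgesOf p)) ∧ TriangleFree (symmDiffE OPT (edgesOf p))) ∧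
      (IsTwoMatching E (symmDiffE APX (edgesOf p)) ∧ TriangleFree (symmDiffE APX (edgesOf p)))) :
    (Ps.filter (fun p => (symmDiffE APX (edgesOf p)).card = APX.card + 1)).card
      = OPT.card - APX.card := by
  have hsub : ∀ p ∈ Ps, edgesOf p ⊆ symmDiffE OPT APX := fun p hp =>
    hPs.2.2 ▸ subset_biUnion_of_mem edgesOf hp
  have hcardAPX : ∀ p ∈ Ps, (symmDiffE APX (edgesOf p)).card + (edgesOf p ∩ APX).card
      = APX.card + (edgesOf p ∩ OPT).card := fun p hp =>
    card_symmDiffE_add_card_inter_of_subset APX OPT _ (symmDiffE_comm OPT APX ▸ hsub p hp)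
  have hmaxP : ∀ p ∈ Ps, (edgesOf p ∩ APX).card ≤ (edgesOf p ∩ OPT).card := fun p hp => by
    have hcardOPT := card_symmDiffE_add_card_inter_of_subset OPT APX _ (hsub p hp)
    have hle := hmax _ (hgood p hp).1.1 (hgood p hp).1.2
    omega
  have hfilter : Ps.filter (fun p => (symmDiffE APX (edgesOf p)).card = APX.card + 1)
      = Ps.filter (fun p => (edgesOf p ∩ OPT).card = (edgesOf p ∩ APX).card + 1) :=
    filter_congr fun p hp => by have := hcardAPX p hp; omega
  have hcount := card_filter_eq_add_one_add_sum Ps _ _ hmaxP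
    fun p hp => (hPs.1 p hp).1.card_inter_le_add_one
  rw [hPs.sum_card_inter, hPs.sum_card_inter, symmDiffE_inter_left,
    symmDiffE_comm, symmDiffE_inter_left] at hcount
  have hOPT := card_sdiff_add_card_inter OPT APX
  have hAPX := card_sdiff_add_card_inter APX OPT
  rw [inter_comm] at hAPX
  rw [hfilter]
  omega

/-- counting the augmenting trails in a decomposition of
`OPT △ APX`: there are exactly `|OPT| - |APX|` of them. -/
theorem stmt_7 (E : Finset (Sym2 V)) (hE : ∀ e ∈ E, ¬ e.IsDiag)
    (OPT APX : Finset (Sym2 V))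
    (hOPT : IsTwoMatching E OPT) (hOPTt : TriangleFree OPT)
    (hmax : ∀ M : Finset (Sym2 V), IsTwoMatching E M → TriangleFree M → M.card ≤ OPT.card)
    (hAPX : IsTwoMatching E APX) (hAPXt : TriangleFree APX)
    (Ps : Finset (List V)) (hPs : IsAltTrailPartition OPT APX Ps)
    (hgood : ∀ p ∈ Ps,
      (IsTwoMatching E (symmDiffE OPT (edgesOf p)) ∧ TriangleFree (symmDiffE OPT (edgesOf p))) ∧
      (IsTwoMatching E (symmDiffE APX (edgesOf p)) ∧ TriangleFree (symmDiffE APX (edgesOf p)))) :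
    (Ps.filter (fun p => (symmDiffE APX (edgesOf p)).card = APX.card + 1)).card
      = OPT.card - APX.card :=
  stmt_7_general E OPT APX hmax Ps hPs hgood
end

section
/- Let G be a graph without parallel edges, T a set of triangles in G, and A1, A2 T-free 2-matchings. Suppose T contains triangles T0 = {u1u2, u2u3, u3u1} and T0' = {u1'u2, u2u3, u3u1'} with u1 ≠ u1', where u1u2, u3u1, u1'u2, u3u1' ∈ A1 \ A2 and u2u3 ∈ A2 \ A1, and suppose that every triangle in T sharing an edge with T0 ∪ T0' has all its vertices in {u1, u2, u3, u1'}, and u1u1' ∈ A2. Then the closed trail P1 = u1u3, u3u2, u2u1', u1'u1 is alternating with respect to (A1, A2), and both A1 △ P1 and A2 △ P1 contain no triangle of T sharing an edge with T0 ∪ T0'. -/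
open Finset

variable {V : Type*} [DecidableEq V]

/-!
The edges of `P1` alternate because `u1` already carries the two `A1`-edges `u1u2` and `u1u3`,
so the degree bound of the 2-matching `A1` excludes `u1u1'` from `A1`.

A triangle of `𝒯` sharing an edge with `T0 ∪ T0'` lives on the four vertices
`u1, u2, u3, u1'`, so it has an edge in each perfect matching of that `K4`.
The matching `{u3u1, u1'u2}` lies in both `A1` and `P1`, the matching `{u2u3, u1u1'}` in both `A2`
and `P1`, so switching along `P1` deletes that edge of the triangle.
-/

lemma IsTriangle.ne_of_mk_mem {T : Finset (Sym2 V)} (hT : IsTriangle T) {x y : V}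
    (h : s(x, y) ∈ T) : x ≠ y := by
  rintro rfl
  obtain ⟨a, b, c, hab, hbc, hac, rfl⟩ := hT
  simp only [mem_insert, mem_singleton, Sym2.eq_iff] at h
  grind

lemma IsTriangle.mk_mem_or_mk_mem {T : Finset (Sym2 V)} (hT : IsTriangle T) {S : Set V}
    (hTS : ∀ e ∈ T, ∀ v ∈ e, v ∈ S) {x y z w : V} (hS : S ⊆ {x, y, z, w}) :
    s(x, y) ∈ T ∨ s(z, w) ∈ T := by
  obtain ⟨a, b, c, hab, hbc, hac, rfl⟩ := hT
  have ha := hS (hTS _ (by simp) a (Sym2.mem_mk_left a b))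
  have hb := hS (hTS _ (by simp) b (Sym2.mem_mk_right a b))
  have hc := hS (hTS _ (by simp) c (Sym2.mem_mk_left c a))
  simp only [Set.mem_insert_iff, Set.mem_singleton_iff] at ha hb hc
  rcases ha with rfl | rfl | rfl | rfl <;> rcases hb with rfl | rfl | rfl | rfl <;>
    rcases hc with rfl | rfl | rfl | rfl <;> simp_all

lemma card_filter_mem_le_degE (F : Finset (Sym2 V)) (v : V) :
    #{e ∈ F | v ∈ e} ≤ degE F v := by
  rw [card_filter]
  refine sum_le_sum fun e _ => ?_
  split_ifs <;> omega

lemma IsTwoMatching.mk_notMem {E M : Finset (Sym2 V)} (hM : IsTwoMatching E M) {v a b c : V}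
    (ha : s(v, a) ∈ M) (hb : s(v, b) ∈ M) (hab : a ≠ b) (hac : a ≠ c) (hbc : b ≠ c) :
    s(v, c) ∉ M := by
  intro hc
  have hsub : ({s(v, a), s(v, b), s(v, c)} : Finset (Sym2 V)) ⊆ {e ∈ M | v ∈ e} := by
    simp [insert_subset_iff, ha, hb, hc]
  have hcard := (card_le_card hsub).trans ((card_filter_mem_le_degE M v).trans (hM.2 v))
  rw [card_insert_of_notMem (by simp only [mem_insert, mem_singleton, Sym2.congr_right]; tauto),
    card_pair (Sym2.congr_right.not.mpr hbc)] at hcard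
  omega

lemma notMem_symmDiffE_of_mem_of_mem {A B : Finset (Sym2 V)} {e : Sym2 V} (hA : e ∈ A)
    (hB : e ∈ B) : e ∉ symmDiffE A B := by
  simp [symmDiffE, hA, hB]

lemma IsTriangle.not_subset_symmDiffE {T A B : Finset (Sym2 V)} (hT : IsTriangle T) {S : Set V}
    (hTS : ∀ e ∈ T, ∀ v ∈ e, v ∈ S) {x y z w : V} (hS : S ⊆ {x, y, z, w})
    (hxyA : s(x, y) ∈ A) (hxyB : s(x, y) ∈ B) (hzwA : s(z, w) ∈ A) (hzwB : s(z, w) ∈ B) :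
    ¬ T ⊆ symmDiffE A B := by
  intro hsub
  obtain hxy | hzw := hT.mk_mem_or_mk_mem hTS hS
  · exact notMem_symmDiffE_of_mem_of_mem hxyA hxyB (hsub hxy)
  · exact notMem_symmDiffE_of_mem_of_mem hzwA hzwB (hsub hzw)

lemma isAltTrail_cycle_four {A1 A2 : Finset (Sym2 V)} {a b c d : V} (hv : [a, b, c, d].Nodup)
    (hab : s(a, b) ∈ A1 ∧ s(a, b) ∉ A2) (hbc : s(b, c) ∈ A2 ∧ s(b, c) ∉ A1)
    (hcd : s(c, d) ∈ A1 ∧ s(c, d) ∉ A2) (hda : s(d, a) ∈ A2 ∧ s(d, a) ∉ A1) :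
    IsAltTrail A1 A2 [a, b, c, d, a] := by
  have hedges : trailEdges [a, b, c, d, a] = [s(a, b), s(b, c), s(c, d), s(d, a)] := rfl
  simp only [List.nodup_cons, List.mem_cons, List.not_mem_nil] at hv
  refine ⟨?_, ?_, ?_⟩ <;> rw [hedges]
  · simp only [List.nodup_cons, List.mem_cons, List.not_mem_nil, Sym2.eq_iff]
    grind
  · simp only [List.mem_cons, List.not_mem_nil, or_false]
    rintro e (rfl | rfl | rfl | rfl) <;> tauto
  · show List.IsChain _ _
    simp only [List.isChain_cons_cons, List.isChain_singleton, and_true]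
    tauto

theorem stmt_12_general (E : Finset (Sym2 V))
    (𝒯 : Set (Finset (Sym2 V))) (h𝒯 : ∀ T ∈ 𝒯, IsTriangle T ∧ T ⊆ E)
    (A1 A2 : Finset (Sym2 V))
    (h1 : IsTwoMatching E A1)
    (u1 u2 u3 u1' : V) (hne : u1 ≠ u1')
    (hT0 : ({s(u1, u2), s(u2, u3), s(u3, u1)} : Finset (Sym2 V)) ∈ 𝒯)
    (hT0' : ({s(u1', u2), s(u2, u3), s(u3, u1')} : Finset (Sym2 V)) ∈ 𝒯)
    (h12 : s(u1, u2) ∈ A1 ∧ s(u1, u2) ∉ A2)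
    (h31 : s(u3, u1) ∈ A1 ∧ s(u3, u1) ∉ A2)
    (h1'2 : s(u1', u2) ∈ A1 ∧ s(u1', u2) ∉ A2)
    (h23 : s(u2, u3) ∈ A2 ∧ s(u2, u3) ∉ A1)
    (hvert : ∀ T ∈ 𝒯,
      (T ∩ (({s(u1, u2), s(u2, u3), s(u3, u1)} : Finset (Sym2 V)) ∪
        {s(u1', u2), s(u2, u3), s(u3, u1')})).Nonempty →
      ∀ e ∈ T, ∀ x ∈ e, x ∈ ({u1, u2, u3, u1'} : Set V))
    (h11' : s(u1, u1') ∈ A2) :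
    IsAltTrail A1 A2 [u1, u3, u2, u1', u1] ∧
    (∀ T ∈ 𝒯,
      (T ∩ (({s(u1, u2), s(u2, u3), s(u3, u1)} : Finset (Sym2 V)) ∪
        {s(u1', u2), s(u2, u3), s(u3, u1')})).Nonempty →
      ¬ T ⊆ symmDiffE A1 (edgesOf [u1, u3, u2, u1', u1])) ∧
    (∀ T ∈ 𝒯,
      (T ∩ (({s(u1, u2), s(u2, u3), s(u3, u1)} : Finset (Sym2 V)) ∪
        {s(u1', u2), s(u2, u3), s(u3, u1')})).Nonempty →
      ¬ T ⊆ symmDiffE A2 (edgesOf [u1, u3, u2, u1', u1])) := by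
  have hT0tri := (h𝒯 _ hT0).1
  have hT0'tri := (h𝒯 _ hT0').1
  have n12 : u1 ≠ u2 := hT0tri.ne_of_mk_mem (by simp)
  have n23 : u2 ≠ u3 := hT0tri.ne_of_mk_mem (by simp)
  have n31 : u3 ≠ u1 := hT0tri.ne_of_mk_mem (by simp)
  have n1'2 : u1' ≠ u2 := hT0'tri.ne_of_mk_mem (by simp)
  have n31' : u3 ≠ u1' := hT0'tri.ne_of_mk_mem (by simp)
  have h11'A1 : s(u1, u1') ∉ A1 :=
    h1.mk_notMem h12.1 (Sym2.eq_swap ▸ h31.1) n23 n1'2.symm n31'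
  have hP : edgesOf [u1, u3, u2, u1', u1] = {s(u1, u3), s(u3, u2), s(u2, u1'), s(u1', u1)} := by
    simp [edgesOf, trailEdges]
  refine ⟨?_, fun T hT hshare => ?_, fun T hT hshare => ?_⟩
  · exact isAltTrail_cycle_four (by simp [hne, n12, n31.symm, n23.symm, n31', n1'2.symm])
      (Sym2.eq_swap ▸ h31) (Sym2.eq_swap ▸ h23) (Sym2.eq_swap ▸ h1'2)
      (Sym2.eq_swap ▸ ⟨h11', h11'A1⟩)
  · exact (h𝒯 T hT).1.not_subset_symmDiffE (hvert T hT hshare) (x := u3) (y := u1) (z := u1')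
      (w := u2) (by simp [Set.insert_subset_iff]) h31.1 (by simp [hP]) h1'2.1 (by simp [hP])
  · exact (h𝒯 T hT).1.not_subset_symmDiffE (hvert T hT hshare) (x := u2) (y := u3) (z := u1)
      (w := u1') (by simp [Set.insert_subset_iff]) h23.1 (by simp [hP]) h11' (by simp [hP])

/-- Case 4-(1) of the induction: the closed trail
`u1u3, u3u2, u2u1', u1'u1` is alternating and switching along it destroys all
triangles of `𝒯` sharing an edge with `T0 ∪ T0'`. -/
theorem stmt_12 (E : Finset (Sym2 V))
    (𝒯 : Set (Finset (Sym2 V))) (h𝒯 : ∀ T ∈ 𝒯, IsTriangle T ∧ T ⊆ E)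
    (A1 A2 : Finset (Sym2 V))
    (h1 : IsTwoMatching E A1) (h1t : TFree 𝒯 A1)
    (h2 : IsTwoMatching E A2) (h2t : TFree 𝒯 A2)
    (u1 u2 u3 u1' : V) (hne : u1 ≠ u1')
    (hT0 : ({s(u1, u2), s(u2, u3), s(u3, u1)} : Finset (Sym2 V)) ∈ 𝒯)
    (hT0' : ({s(u1', u2), s(u2, u3), s(u3, u1')} : Finset (Sym2 V)) ∈ 𝒯)
    (h12 : s(u1, u2) ∈ A1 ∧ s(u1, u2) ∉ A2)
    (h31 : s(u3, u1) ∈ A1 ∧ s(u3, u1) ∉ A2)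
    (h1'2 : s(u1', u2) ∈ A1 ∧ s(u1', u2) ∉ A2)
    (h31' : s(u3, u1') ∈ A1 ∧ s(u3, u1') ∉ A2)
    (h23 : s(u2, u3) ∈ A2 ∧ s(u2, u3) ∉ A1)
    (hvert : ∀ T ∈ 𝒯,
      (T ∩ (({s(u1, u2), s(u2, u3), s(u3, u1)} : Finset (Sym2 V)) ∪
        {s(u1', u2), s(u2, u3), s(u3, u1')})).Nonempty →
      ∀ e ∈ T, ∀ x ∈ e, x ∈ ({u1, u2, u3, u1'} : Set V))
    (h11' : s(u1, u1') ∈ A2) :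
    IsAltTrail A1 A2 [u1, u3, u2, u1', u1] ∧
    (∀ T ∈ 𝒯,
      (T ∩ (({s(u1, u2), s(u2, u3), s(u3, u1)} : Finset (Sym2 V)) ∪
        {s(u1', u2), s(u2, u3), s(u3, u1')})).Nonempty →
      ¬ T ⊆ symmDiffE A1 (edgesOf [u1, u3, u2, u1', u1])) ∧
    (∀ T ∈ 𝒯,
      (T ∩ (({s(u1, u2), s(u2, u3), s(u3, u1)} : Finset (Sym2 V)) ∪
        {s(u1', u2), s(u2, u3), s(u3, u1')})).Nonempty →
      ¬ T ⊆ symmDiffE A2 (edgesOf [u1, u3, u2, u1', u1])) :=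
  stmt_12_general E 𝒯 h𝒯 A1 A2 h1 u1 u2 u3 u1' hne hT0 hT0' h12 h31 h1'2 h23 hvert h11'
end

section
/- Let G be a graph without parallel edges, T a set of triangles in G, A1 a T-free 2-matching, and T0 = {u1u2, u2u3, u3u1} ∈ T with {u1u2, u3u1} ⊆ A1 and suppose there is no vertex u1' ≠ u1 with {u1'u2, u2u3, u3u1'} ∈ T and {u1'u2, u3u1'} ⊆ A1. Then the edge set A1' = (A1 \ {u1u2, u3u1}) ∪ {u2u3} is T'-free, where T' = T \ T({u1u2, u3u1}) is the set of triangles of T not containing u1u2 or u3u1. -/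
open Finset

variable {V : Type*} [DecidableEq V]

theorem IsTriangle.exists_eq_of_mem {T : Finset (Sym2 V)} (hT : IsTriangle T) {u v : V}
    (huv : s(u, v) ∈ T) : ∃ x, x ≠ u ∧ x ≠ v ∧ T = {s(x, u), s(u, v), s(v, x)} := by
  obtain ⟨a, b, c, hab, hbc, hac, rfl⟩ := hT
  simp only [mem_insert, mem_singleton, Sym2.eq_iff] at huv
  rcases huv with (⟨rfl, rfl⟩ | ⟨rfl, rfl⟩) | (⟨rfl, rfl⟩ | ⟨rfl, rfl⟩) | (⟨rfl, rfl⟩ | ⟨rfl, rfl⟩)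
  all_goals
    first
    | refine ⟨a, by grind, by grind, ?_⟩
    | refine ⟨b, by grind, by grind, ?_⟩
    | refine ⟨c, by grind, by grind, ?_⟩
    ext; simp only [mem_insert, mem_singleton, Sym2.eq_swap] <;> tauto

theorem stmt_13_general (E : Finset (Sym2 V))
    (𝒯 : Set (Finset (Sym2 V))) (h𝒯 : ∀ T ∈ 𝒯, IsTriangle T ∧ T ⊆ E)
    (A1 : Finset (Sym2 V))
    (h1t : TFree 𝒯 A1)
    (u1 u2 u3 : V)
    (hno : ¬ ∃ u1' : V, u1' ≠ u1 ∧
      ({s(u1', u2), s(u2, u3), s(u3, u1')} : Finset (Sym2 V)) ∈ 𝒯 ∧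
      s(u1', u2) ∈ A1 ∧ s(u3, u1') ∈ A1) :
    ∀ T ∈ 𝒯, s(u1, u2) ∉ T → s(u3, u1) ∉ T →
      ¬ T ⊆ (A1 \ {s(u1, u2), s(u3, u1)}) ∪ {s(u2, u3)} := by
  intro T hT hn12 _ hsub
  have hA1 : ∀ e ∈ T, e ≠ s(u2, u3) → e ∈ A1 := fun e he hne =>
    (mem_sdiff.1 ((mem_union.1 (hsub he)).resolve_right (by simpa using hne))).1
  by_cases h23 : s(u2, u3) ∈ T
  · obtain ⟨x, hx2, hx3, rfl⟩ := (h𝒯 T hT).1.exists_eq_of_mem h23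
    have hx1 : x ≠ u1 := by rintro rfl; exact hn12 (by simp)
    exact hno ⟨x, hx1, hT, hA1 _ (by simp) (by simp [hx2, hx3]),
      hA1 _ (by simp) (by simp [hx2, hx3])⟩
  · exact h1t T hT fun e he => hA1 e he (ne_of_mem_of_not_mem he h23)

/-- Case 3 of the induction: replacing the two `A1`-edges
`u1u2, u3u1` of the triangle by `u2u3` yields a `𝒯'`-free set, where `𝒯'`
consists of the triangles of `𝒯` containing neither `u1u2` nor `u3u1`. -/
theorem stmt_13 (E : Finset (Sym2 V))
    (𝒯 : Set (Finset (Sym2 V))) (h𝒯 : ∀ T ∈ 𝒯, IsTriangle T ∧ T ⊆ E)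
    (A1 : Finset (Sym2 V))
    (h1 : IsTwoMatching E A1) (h1t : TFree 𝒯 A1)
    (u1 u2 u3 : V)
    (hT0 : ({s(u1, u2), s(u2, u3), s(u3, u1)} : Finset (Sym2 V)) ∈ 𝒯)
    (h12 : s(u1, u2) ∈ A1) (h31 : s(u3, u1) ∈ A1)
    (hno : ¬ ∃ u1' : V, u1' ≠ u1 ∧
      ({s(u1', u2), s(u2, u3), s(u3, u1')} : Finset (Sym2 V)) ∈ 𝒯 ∧
      s(u1', u2) ∈ A1 ∧ s(u3, u1') ∈ A1) :
    ∀ T ∈ 𝒯, s(u1, u2) ∉ T → s(u3, u1) ∉ T →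
      ¬ T ⊆ (A1 \ {s(u1, u2), s(u3, u1)}) ∪ {s(u2, u3)} :=
  stmt_13_general E 𝒯 h𝒯 A1 h1t u1 u2 u3 hno
end

section
/- Let G be a simple graph and let A1, A2 be triangle-free 2-matchings with |A1| > |A2|. Then there exists an alternating trail P with respect to (A1, A2), contained in A1 △ A2, such that A2 △ P is a triangle-free 2-matching with |A2 △ P| = |A2| + 1. -/
/-!
Among the triangle-free 2-matchings `B` larger than `A2` with `B △ A2 ⊆ A1 △ A2`, take one with
`|B △ A2|` minimal, so that `B` is the only such matching obtained by flipping edges of `B △ A2`.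
Since `|B \ A2| > |A2 \ B|`, handshaking gives a vertex `u` with more `B \ A2`-edges than
`A2 \ B`-edges. From such a vertex one can either add an edge `ua` of `B \ A2` to `A2` (done),
or add it while removing an edge `ay` of `A2 \ B`. In the second case the new matching `A2'` has
the size of `A2`, `B` is still minimal for it, and `y` is again an excess vertex: otherwise the
same step with the roles of `B` and `A2` exchanged would produce a smaller flip improving `A2`.
Induction on `|B △ A2|` thus builds the trail `u a y …`, which works for `(A1, A2)` as well.
-/

open Finset

variable {V : Type*} [DecidableEq V]

variable {E F G S M A1 A2 : Finset (Sym2 V)} {e g : Sym2 V} {u v a x y : V}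

lemma mem_symmDiffE {A B : Finset (Sym2 V)} :
    e ∈ symmDiffE A B ↔ e ∈ A ∧ e ∉ B ∨ e ∈ B ∧ e ∉ A := by
  simp [symmDiffE]

lemma degE_union_add_degE_inter (F G : Finset (Sym2 V)) (v : V) :
    degE (F ∪ G) v + degE (F ∩ G) v = degE F v + degE G v :=
  sum_union_inter

lemma degE_sdiff_add_degE_inter (F G : Finset (Sym2 V)) (v : V) :
    degE (F \ G) v + degE (F ∩ G) v = degE F v := by
  rw [degE, degE, ← sum_union (disjoint_sdiff_inter F G), sdiff_union_inter]
  rfl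

lemma degE_mono (h : F ⊆ G) (v : V) : degE F v ≤ degE G v :=
  sum_le_sum_of_subset h

lemma degE_erase_add (hg : g ∈ F) (v : V) : degE (F.erase g) v + degE {g} v = degE F v := by
  rw [degE, degE, sum_singleton]
  exact sum_erase_add F _ hg

lemma degE_singleton_of_notMem (hv : v ∉ g) : degE {g} v = 0 := by
  have : g ≠ s(v, v) := by rintro rfl; simp at hv
  simp [degE, this, hv]

lemma degE_singleton_of_mem (hv : v ∈ g) (hg : ¬ g.IsDiag) : degE {g} v = 1 := by
  have : g ≠ s(v, v) := by rintro rfl; simp at hg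
  simp [degE, this, hv]

lemma one_le_degE_singleton (hv : v ∈ g) : 1 ≤ degE {g} v := by
  rw [degE, sum_singleton]
  split_ifs <;> simp_all

lemma card_le_degE {T : Finset (Sym2 V)} (hT : T ⊆ F) (hv : ∀ e ∈ T, v ∈ e) :
    #T ≤ degE F v :=
  calc #T = ∑ e ∈ T, 1 := card_eq_sum_ones T
    _ ≤ ∑ e ∈ T, degE {e} v := sum_le_sum fun e he => one_le_degE_singleton (hv e he)
    _ = degE T v := by simp [degE]
    _ ≤ degE F v := degE_mono hT v

lemma exists_mem_of_degE_pos (h : 0 < degE F v) : ∃ e ∈ F, v ∈ e := by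
  by_contra! hF
  have : degE F v = ∑ e ∈ F, degE {e} v := by simp [degE]
  rw [this, sum_eq_zero fun e he => degE_singleton_of_notMem (hF e he)] at h
  exact h.false

lemma eq_of_degE_le_one (hd : degE F v ≤ 1) (hx : s(x, v) ∈ F) (hy : s(y, v) ∈ F) : x = y := by
  by_contra hxy
  have : #{s(x, v), s(y, v)} ≤ degE F v :=
    card_le_degE (by simp [insert_subset_iff, hx, hy]) (by simp)
  rw [card_pair (by rw [Ne, Sym2.eq_iff]; grind)] at this
  omega

lemma sum_degE_eq_two_mul_card {W : Finset V} (hF : ∀ e ∈ F, ¬ e.IsDiag)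
    (hW : ∀ e ∈ F, ∀ v ∈ e, v ∈ W) : ∑ v ∈ W, degE F v = 2 * #F := by
  have hedge : ∀ e ∈ F, ∑ v ∈ W, degE {e} v = 2 := by
    intro e he
    calc ∑ v ∈ W, degE {e} v = ∑ v ∈ W, if v ∈ e then 1 else 0 := by
          refine sum_congr rfl fun v _ => ?_
          split_ifs with hv
          exacts [degE_singleton_of_mem hv (hF e he), degE_singleton_of_notMem hv]
      _ = #e.toFinset := by
          rw [← card_filter]
          congr 1
          ext v
          simpa [Sym2.mem_toFinset] using hW e he v
      _ = 2 := Sym2.card_toFinset_of_not_isDiag e (hF e he)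
  calc ∑ v ∈ W, degE F v = ∑ e ∈ F, ∑ v ∈ W, degE {e} v := by
        simp only [degE, sum_singleton]
        exact sum_comm
    _ = 2 * #F := by rw [sum_congr rfl hedge, sum_const, smul_eq_mul, mul_comm]

lemma exists_degE_sdiff_lt (hF : ∀ e ∈ F, ¬ e.IsDiag) (hG : ∀ e ∈ G, ¬ e.IsDiag)
    (h : #G < #F) : ∃ v, degE (G \ F) v < degE (F \ G) v := by
  set W := (F ∪ G).biUnion Sym2.toFinset
  have hW : ∀ e ∈ F ∪ G, ∀ v ∈ e, v ∈ W := fun e he v hv =>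
    mem_biUnion.mpr ⟨e, he, Sym2.mem_toFinset.mpr hv⟩
  have hsum : ∑ v ∈ W, degE (G \ F) v < ∑ v ∈ W, degE (F \ G) v := by
    rw [sum_degE_eq_two_mul_card (fun e he => hG e (mem_sdiff.mp he).1)
        (fun e he => hW e (mem_union_right _ (mem_sdiff.mp he).1)),
      sum_degE_eq_two_mul_card (fun e he => hF e (mem_sdiff.mp he).1)
        (fun e he => hW e (mem_union_left _ (mem_sdiff.mp he).1))]
    have := card_sdiff_lt_card_sdiff_iff.mpr h
    omega
  obtain ⟨v, -, hv⟩ := exists_lt_of_sum_lt hsum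
  exact ⟨v, hv⟩

lemma TriangleFree.insert (hS : TriangleFree S) (h : ∀ x, s(a, x) ∈ S → s(x, u) ∉ S) :
    TriangleFree (insert s(u, a) S) := by
  rintro T ⟨p, q, r, hpq, hqr, hpr, rfl⟩ hT
  have hpqr := hS _ ⟨p, q, r, hpq, hqr, hpr, rfl⟩
  have h' : ∀ x, s(x, a) ∈ S → s(u, x) ∉ S := fun x => by simpa only [Sym2.eq_swap] using h x
  -- the third vertex of a triangle through `s(u, a)` is one of `p, q, r`
  have := h p; have := h q; have := h r; have := h' p; have := h' q; have := h' r
  simp only [insert_subset_iff, singleton_subset_iff, mem_insert, Sym2.eq_iff] at hT hpqr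
  grind

def IsTriangleFreeTwoMatching (E M : Finset (Sym2 V)) : Prop :=
  IsTwoMatching E M ∧ TriangleFree M

lemma IsTriangleFreeTwoMatching.ne_of_mk_mem (hE : ∀ e ∈ E, ¬ e.IsDiag)
    (hM : IsTriangleFreeTwoMatching E M) (h : s(x, y) ∈ M) : x ≠ y :=
  fun hxy => hE _ (hM.1.1 h) (by simp [hxy])

lemma IsTriangleFreeTwoMatching.subset (hM : IsTriangleFreeTwoMatching E M) (hS : S ⊆ M) :
    IsTriangleFreeTwoMatching E S :=
  ⟨⟨hS.trans hM.1.1, fun v => (degE_mono hS v).trans (hM.1.2 v)⟩,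
    fun T hT hTS => hM.2 T hT (hTS.trans hS)⟩

lemma IsTriangleFreeTwoMatching.insert_of_degE_le_one (hE : ∀ e ∈ E, ¬ e.IsDiag)
    (hS : IsTriangleFreeTwoMatching E S) (he : s(u, a) ∈ E)
    (hu : degE S u ≤ 1) (ha : degE S a ≤ 1) (hno : ∀ x, s(a, x) ∈ S → s(x, u) ∉ S) :
    IsTriangleFreeTwoMatching E (insert s(u, a) S) := by
  refine ⟨⟨insert_subset he hS.1.1, fun v => ?_⟩, hS.2.insert hno⟩
  have hle : degE (insert s(u, a) S) v ≤ degE {s(u, a)} v + degE S v := by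
    have := degE_union_add_degE_inter {s(u, a)} S v
    rw [← insert_eq] at this
    omega
  by_cases hv : v ∈ s(u, a)
  · rw [degE_singleton_of_mem hv (hE _ he)] at hle
    rcases Sym2.mem_iff.mp hv with rfl | rfl <;> omega
  · rw [degE_singleton_of_notMem hv] at hle
    have := hS.1.2 v
    omega

lemma IsTriangleFreeTwoMatching.insert_erase (hE : ∀ e ∈ E, ¬ e.IsDiag)
    (hM : IsTriangleFreeTwoMatching E M) (he : s(u, a) ∈ E) (hg : s(a, y) ∈ M) (hu : degE M u ≤ 1)
    (hno : ∀ x, s(a, x) ∈ M.erase s(a, y) → s(x, u) ∉ M.erase s(a, y)) :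
    IsTriangleFreeTwoMatching E (insert s(u, a) (M.erase s(a, y))) := by
  refine (hM.subset (erase_subset _ _)).insert_of_degE_le_one hE he
    ((degE_mono (erase_subset _ _) u).trans hu) ?_ hno
  have := degE_erase_add hg a
  have := one_le_degE_singleton (Sym2.mem_mk_left a y)
  have := hM.1.2 a
  omega

-- The excluded configuration (an `A1 ∩ A2`-edge `s(a, x)` and an `A2 \ A1`-edge `s(x, u)`) is
-- the one where `s(u, a)` closes a triangle of `A2` whose other edge at `a` cannot be removed.
lemma insert_or_swap_of_not_stuck (hE : ∀ e ∈ E, ¬ e.IsDiag)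
    (h1 : IsTriangleFreeTwoMatching E A1) (h2 : IsTriangleFreeTwoMatching E A2)
    (he : s(u, a) ∈ A1 \ A2) (hu : degE A2 u ≤ 1)
    (hns : ∀ x, s(a, x) ∈ A1 ∩ A2 → s(x, u) ∉ A2 \ A1) :
    IsTriangleFreeTwoMatching E (insert s(u, a) A2) ∨
      ∃ y, s(a, y) ∈ A2 \ A1 ∧ IsTriangleFreeTwoMatching E (insert s(u, a) (A2.erase s(a, y))) := by
  obtain ⟨he1, he2⟩ := mem_sdiff.mp he
  have heE := h1.1.1 he1
  by_cases hx : ∃ x, s(a, x) ∈ A2 ∧ s(x, u) ∈ A2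
  · obtain ⟨x, hax, hxu⟩ := hx
    -- adding `s(u, a)` would close the triangle `u a x`; `s(a, x)` is not in `A1`, so drop it
    have hax1 : s(a, x) ∉ A1 := by
      intro hax1
      have hxu1 : s(x, u) ∈ A1 := by
        by_contra hxu1
        exact hns x (mem_inter.mpr ⟨hax1, hax⟩) (mem_sdiff.mpr ⟨hxu, hxu1⟩)
      refine h1.2 _ ⟨u, a, x, h1.ne_of_mk_mem hE he1, h2.ne_of_mk_mem hE hax,
        (h2.ne_of_mk_mem hE hxu).symm, rfl⟩ ?_
      simp [insert_subset_iff, he1, hax1, hxu1]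
    refine Or.inr ⟨x, mem_sdiff.mpr ⟨hax, hax1⟩, h2.insert_erase hE heE hax hu ?_⟩
    intro x' hax' hx'u
    obtain rfl := eq_of_degE_le_one hu (mem_of_mem_erase hx'u) hxu
    exact notMem_erase _ _ hax'
  push Not at hx
  by_cases ha : degE A2 a ≤ 1
  · exact Or.inl (h2.insert_of_degE_le_one hE heE hu ha hx)
  -- `a` has two `A2`-edges but, besides `s(u, a)`, at most one more `A1`-edge
  have hR := card_le_degE (singleton_subset_iff.mpr he) (v := a) (by simp)
  have h1a := degE_sdiff_add_degE_inter A1 A2 a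
  have h2a := degE_sdiff_add_degE_inter A2 A1 a
  rw [card_singleton] at hR
  rw [inter_comm] at h2a
  have := h1.1.2 a
  obtain ⟨g, hg, hag⟩ := exists_mem_of_degE_pos (F := A2 \ A1) (v := a) (by omega)
  obtain ⟨y, rfl⟩ := Sym2.mem_iff_exists.mp hag
  exact Or.inr ⟨y, hg, h2.insert_erase hE heE (mem_sdiff.mp hg).1 hu
    fun x h h' => hx x (mem_of_mem_erase h) (mem_of_mem_erase h')⟩

theorem exists_insert_or_swap (hE : ∀ e ∈ E, ¬ e.IsDiag)
    (h1 : IsTriangleFreeTwoMatching E A1) (h2 : IsTriangleFreeTwoMatching E A2)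
    (hu : degE (A2 \ A1) u < degE (A1 \ A2) u) :
    ∃ a, s(u, a) ∈ A1 \ A2 ∧ (IsTriangleFreeTwoMatching E (insert s(u, a) A2) ∨
      ∃ y, s(a, y) ∈ A2 \ A1 ∧
        IsTriangleFreeTwoMatching E (insert s(u, a) (A2.erase s(a, y)))) := by
  have h1u := degE_sdiff_add_degE_inter A1 A2 u
  have h2u := degE_sdiff_add_degE_inter A2 A1 u
  rw [inter_comm] at h2u
  have := h1.1.2 u
  have hu2 : degE A2 u ≤ 1 := by omega
  obtain ⟨e, he, hue⟩ := exists_mem_of_degE_pos (by omega : 0 < degE (A1 \ A2) u)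
  obtain ⟨a, rfl⟩ := Sym2.mem_iff_exists.mp hue
  by_cases hstuck : ∃ x, s(a, x) ∈ A1 ∩ A2 ∧ s(x, u) ∈ A2 \ A1
  swap
  · push Not at hstuck
    exact ⟨a, he, insert_or_swap_of_not_stuck hE h1 h2 he hu2 hstuck⟩
  obtain ⟨x, hax, hxu⟩ := hstuck
  -- `s(x, u)` is the only `A2`-edge at `u`, so `u` has a second edge `s(u, a')` in `A1 \ A2`
  have hB := card_le_degE (singleton_subset_iff.mpr hxu) (v := u) (by simp)
  have hR := degE_erase_add he u
  rw [card_singleton] at hB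
  rw [degE_singleton_of_mem (Sym2.mem_mk_left u a) (hE _ (h1.1.1 (mem_sdiff.mp he).1))] at hR
  obtain ⟨e', he', hue'⟩ := exists_mem_of_degE_pos (F := (A1 \ A2).erase s(u, a)) (v := u)
    (by omega)
  obtain ⟨a', rfl⟩ := Sym2.mem_iff_exists.mp hue'
  obtain ⟨hne, he'⟩ := mem_erase.mp he'
  refine ⟨a', he', insert_or_swap_of_not_stuck hE h1 h2 he' hu2 ?_⟩
  intro x' hax' hx'u
  obtain rfl : x = x' := eq_of_degE_le_one hu2 (mem_sdiff.mp hxu).1 (mem_sdiff.mp hx'u).1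
  -- otherwise `x` would have the three `A2`-edges `s(a, x)`, `s(a', x)`, `s(x, u)`
  have hua := h1.ne_of_mk_mem hE (mem_sdiff.mp he).1
  have hua' := h1.ne_of_mk_mem hE (mem_sdiff.mp he').1
  have hT : #{s(a, x), s(a', x), s(x, u)} ≤ degE A2 x := card_le_degE
    (by simp [insert_subset_iff, (mem_inter.mp hax).2, (mem_inter.mp hax').2, (mem_sdiff.mp hxu).1])
    (by simp)
  rw [card_eq_three.mpr ⟨_, _, _, ?_, ?_, ?_, rfl⟩] at hT
  · have := h2.1.2 x
    omega
  all_goals simp only [Ne, Sym2.eq_iff] at hne ⊢; grind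

lemma edgesOf_cons_cons (x y : V) (l : List V) :
    edgesOf (x :: y :: l) = insert s(x, y) (edgesOf (y :: l)) := by
  simp [edgesOf, trailEdges]

lemma IsAltTrail.congr {B1 B2 : Finset (Sym2 V)} {p : List V} (h : IsAltTrail A1 A2 p)
    (h1 : ∀ e ∈ edgesOf p, e ∈ A1 ↔ e ∈ B1) (h2 : ∀ e ∈ edgesOf p, e ∈ A2 ↔ e ∈ B2) :
    IsAltTrail B1 B2 p := by
  simp only [edgesOf, List.mem_toFinset] at h1 h2
  refine ⟨h.1, fun e he => ?_, h.2.2.imp_of_mem_imp fun e f he hf hef => ?_⟩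
  · rw [← h1 e he, ← h2 e he]
    exact h.2.1 e he
  · rwa [← h1 e he, ← h2 f hf]

lemma IsAltTrail.cons {z : V} {l : List V} (h : IsAltTrail A1 A2 (y :: z :: l))
    (hxy : s(x, y) ∈ symmDiffE A1 A2) (hnew : s(x, y) ∉ edgesOf (y :: z :: l))
    (halt : s(x, y) ∈ A1 ↔ s(y, z) ∈ A2) : IsAltTrail A1 A2 (x :: y :: z :: l) := by
  obtain ⟨hnd, hmem, hch⟩ := h
  have hcons : trailEdges (x :: y :: z :: l) = s(x, y) :: trailEdges (y :: z :: l) := rfl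
  rw [IsAltTrail, hcons]
  refine ⟨List.nodup_cons.mpr ⟨by simpa [edgesOf] using hnew, hnd⟩, ?_, ?_⟩
  · simpa [mem_symmDiffE.mp hxy] using hmem
  · exact List.isChain_cons_cons.mpr ⟨halt, hch⟩

def IsAugmentingTrail (E A1 A2 : Finset (Sym2 V)) (p : List V) : Prop :=
  IsAltTrail A1 A2 p ∧ edgesOf p ⊆ symmDiffE A1 A2 ∧
    IsTwoMatching E (symmDiffE A2 (edgesOf p)) ∧ TriangleFree (symmDiffE A2 (edgesOf p)) ∧
    (symmDiffE A2 (edgesOf p)).card = A2.card + 1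

lemma isAugmentingTrail_pair (he : s(u, a) ∈ A1 \ A2)
    (h : IsTriangleFreeTwoMatching E (insert s(u, a) A2)) : IsAugmentingTrail E A1 A2 [u, a] := by
  obtain ⟨he1, he2⟩ := mem_sdiff.mp he
  have hedges : edgesOf [u, a] = {s(u, a)} := by simp [edgesOf, trailEdges]
  have hflip : symmDiffE A2 {s(u, a)} = insert s(u, a) A2 := by
    ext f
    by_cases hf : f = s(u, a) <;> simp [mem_symmDiffE, hf, he2]
  rw [IsAugmentingTrail, hedges, hflip, card_insert_of_notMem he2]
  refine ⟨⟨List.nodup_singleton _, ?_, List.isChain_singleton _⟩, ?_, h.1, h.2, rfl⟩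
  · simp [trailEdges, he1, he2]
  · simp [mem_symmDiffE, he1, he2]

lemma symmDiffE_insert_erase_ssubset (he : e ∈ A1 \ A2) (hg : g ∈ A2 \ A1) :
    symmDiffE A1 (insert e (A2.erase g)) ⊂ symmDiffE A1 A2 := by
  rw [mem_sdiff] at he hg
  refine ssubset_iff_of_subset (fun f hf => ?_) |>.mpr ⟨e, by simp [mem_symmDiffE, he]⟩
  by_cases hfe : f = e
  · simp_all [mem_symmDiffE]
  by_cases hfg : f = g <;> simp_all [mem_symmDiffE]

lemma card_insert_erase_of_mem {α : Type*} [DecidableEq α] {s : Finset α} {a b : α}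
    (ha : a ∉ s) (hb : b ∈ s) : #(insert a (s.erase b)) = #s := by
  rw [card_insert_of_notMem (fun h => ha (mem_of_mem_erase h)), card_erase_add_one hb]

lemma symmDiffE_insert_insert {P : Finset (Sym2 V)} (he : e ∉ A2) (hg : g ∈ A2) (heP : e ∉ P)
    (hgP : g ∉ P) (heg : e ≠ g) :
    symmDiffE A2 (insert e (insert g P)) = symmDiffE (insert e (A2.erase g)) P := by
  ext f
  by_cases hfe : f = e
  · simp [mem_symmDiffE, hfe, he, heP]
  by_cases hfg : f = g
  · simp [mem_symmDiffE, hfg, hg, hgP, heg.symm]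
  simp [mem_symmDiffE, hfe, hfg]

lemma IsAugmentingTrail.cons_cons {a' : V} {t : List V} (he : s(u, a) ∈ A1 \ A2)
    (hg : s(a, y) ∈ A2 \ A1) (hy : s(y, a') ∈ A1)
    (hp : IsAugmentingTrail E A1 (insert s(u, a) (A2.erase s(a, y))) (y :: a' :: t)) :
    IsAugmentingTrail E A1 A2 (u :: a :: y :: a' :: t) := by
  obtain ⟨he1, he2⟩ := mem_sdiff.mp he
  obtain ⟨hg2, hg1⟩ := mem_sdiff.mp hg
  obtain ⟨halt, hsub, hmatch, htf, hcard⟩ := hp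
  set A2' := insert s(u, a) (A2.erase s(a, y))
  set P := edgesOf (y :: a' :: t) with hP
  have heg : s(u, a) ≠ s(a, y) := fun h => hg1 (h ▸ he1)
  have heP : s(u, a) ∉ P := fun h => by simpa [A2', mem_symmDiffE, he1] using hsub h
  have hgP : s(a, y) ∉ P := fun h => by simpa [A2', mem_symmDiffE, hg1, heg.symm] using hsub h
  have hA2 : ∀ f ∈ P, f ∈ A2' ↔ f ∈ A2 := fun f hf => by
    have : f ≠ s(u, a) := by rintro rfl; exact heP hf
    have : f ≠ s(a, y) := by rintro rfl; exact hgP hf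
    simp [A2', *]
  have hyP : s(y, a') ∈ P := by simp [P, edgesOf_cons_cons]
  have hy2 : s(y, a') ∉ A2 := fun h => by
    simpa [mem_symmDiffE, hy, (hA2 _ hyP).mpr h] using hsub hyP
  have hflip : symmDiffE A2 (edgesOf (u :: a :: y :: a' :: t)) = symmDiffE A2' P := by
    rw [edgesOf_cons_cons, edgesOf_cons_cons, ← hP]
    exact symmDiffE_insert_insert he2 hg2 heP hgP heg
  have hcard' : #A2' = #A2 := card_insert_erase_of_mem he2 hg2
  refine ⟨((halt.congr (fun _ _ => Iff.rfl) hA2).cons ?_ hgP ?_).cons ?_ ?_ ?_, ?_,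
    hflip ▸ hmatch, hflip ▸ htf, by rw [hflip, hcard, hcard']⟩
  · simp [mem_symmDiffE, hg1, hg2]
  · simp [hg1, hy2]
  · simp [mem_symmDiffE, he1, he2]
  · rw [edgesOf_cons_cons, ← hP]
    simp [heP, heg]
  · simp [he1, hg2]
  · rw [edgesOf_cons_cons, edgesOf_cons_cons]
    refine insert_subset ?_ <| insert_subset ?_ <|
      hsub.trans (symmDiffE_insert_erase_ssubset he hg).subset
    · simp [mem_symmDiffE, he1, he2]
    · simp [mem_symmDiffE, hg1, hg2]

def IsMinimalImprovement (E A1 A2 : Finset (Sym2 V)) : Prop :=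
  IsTriangleFreeTwoMatching E A1 ∧ #A2 < #A1 ∧
    ∀ M, IsTriangleFreeTwoMatching E M → #A2 < #M → symmDiffE M A2 ⊆ symmDiffE A1 A2 → M = A1

lemma exists_isMinimalImprovement (h1 : IsTriangleFreeTwoMatching E A1) (hlt : #A2 < #A1) :
    ∃ B, symmDiffE B A2 ⊆ symmDiffE A1 A2 ∧ IsMinimalImprovement E B A2 := by
  classical
  let C := E.powerset.filter fun M =>
    IsTriangleFreeTwoMatching E M ∧ #A2 < #M ∧ symmDiffE M A2 ⊆ symmDiffE A1 A2
  obtain ⟨B, hB, hBmin⟩ := exists_min_image C (fun M => #(symmDiffE M A2))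
    ⟨A1, mem_filter.mpr ⟨mem_powerset.mpr h1.1.1, h1, hlt, subset_rfl⟩⟩
  obtain ⟨-, hB, hBlt, hBsub⟩ := mem_filter.mp hB
  refine ⟨B, hBsub, hB, hBlt, fun M hM hMlt hMsub => ?_⟩
  have hle := hBmin M (mem_filter.mpr ⟨mem_powerset.mpr hM.1.1, hM, hMlt, hMsub.trans hBsub⟩)
  exact symmDiff_left_injective A2 (eq_of_subset_of_card_le hMsub hle)

lemma IsMinimalImprovement.degE_sdiff_le (hE : ∀ e ∈ E, ¬ e.IsDiag)
    (hmin : IsMinimalImprovement E A1 A2) (h2 : IsTriangleFreeTwoMatching E A2) (v : V) :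
    degE (A2 \ A1) v ≤ degE (A1 \ A2) v := by
  by_contra! hv
  obtain ⟨hA1, hlt, hA1min⟩ := hmin
  obtain ⟨a, hb, hstep⟩ := exists_insert_or_swap hE h2 hA1 hv
  -- either way, adding `s(v, a)` to `A1` yields a smaller flip of `A2` that is still an improvement
  obtain ⟨hb2, hb1⟩ := mem_sdiff.mp hb
  have absurd_of_insert : ∀ S ⊆ A1, A1 ∩ A2 ⊆ S → #A1 ≤ #S + 1 →
      IsTriangleFreeTwoMatching E (insert s(v, a) S) → False := by
    intro S hS1 hS12 hcard hM
    have hbS : s(v, a) ∉ S := fun h => hb1 (hS1 h)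
    refine hb1 (hA1min _ hM (by rw [card_insert_of_notMem hbS]; omega) (fun f hf => ?_) ▸
      mem_insert_self _ _)
    have : f ∈ A2 → f ∈ A1 → f ∈ S := fun h2 h1 => hS12 (mem_inter.mpr ⟨h1, h2⟩)
    by_cases hfb : f = s(v, a)
    · simp_all [mem_symmDiffE]
    · simp only [mem_symmDiffE, mem_insert, hfb, false_or] at hf ⊢
      grind
  obtain hins | ⟨y, hr, hswap⟩ := hstep
  · exact absurd_of_insert A1 subset_rfl inter_subset_left (by omega) hins
  · obtain ⟨hr1, hr2⟩ := mem_sdiff.mp hr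
    refine absurd_of_insert _ (erase_subset _ _) (fun f hf => ?_)
      (by rw [card_erase_add_one hr1]) hswap
    exact mem_erase.mpr ⟨fun h => hr2 (h ▸ (mem_inter.mp hf).2), (mem_inter.mp hf).1⟩

lemma IsMinimalImprovement.swap (hmin : IsMinimalImprovement E A1 A2) (he : e ∈ A1 \ A2)
    (hg : g ∈ A2 \ A1) : IsMinimalImprovement E A1 (insert e (A2.erase g)) := by
  obtain ⟨hA1, hlt, hA1min⟩ := hmin
  have hcard := card_insert_erase_of_mem (mem_sdiff.mp he).2 (mem_sdiff.mp hg).1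
  refine ⟨hA1, hcard ▸ hlt, fun M hM hMlt hMsub => hA1min M hM (hcard ▸ hMlt) fun f hf => ?_⟩
  have := @hMsub f
  rw [mem_sdiff] at he hg
  by_cases hfe : f = e
  · simp_all [mem_symmDiffE]
  by_cases hfg : f = g <;> simp_all [mem_symmDiffE]

lemma IsMinimalImprovement.degE_sdiff_lt_of_swap (hE : ∀ e ∈ E, ¬ e.IsDiag)
    (hmin : IsMinimalImprovement E A1 A2) (h2 : IsTriangleFreeTwoMatching E A2)
    (he : s(u, a) ∈ A1 \ A2) (hg : s(a, y) ∈ A2 \ A1) :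
    degE (insert s(u, a) (A2.erase s(a, y)) \ A1) y <
      degE (A1 \ insert s(u, a) (A2.erase s(a, y))) y := by
  obtain ⟨he1, he2⟩ := mem_sdiff.mp he
  obtain ⟨hg2, hg1⟩ := mem_sdiff.mp hg
  have hyu : y ∉ s(u, a) := by
    rw [Sym2.mem_iff]
    rintro (rfl | rfl)
    · exact he2 (by rwa [Sym2.eq_swap])
    · exact h2.ne_of_mk_mem hE hg2 rfl
  have hR : A1 \ insert s(u, a) (A2.erase s(a, y)) = (A1 \ A2).erase s(u, a) := by
    ext f
    by_cases hfg : f = s(a, y) <;> by_cases hfe : f = s(u, a) <;> simp_all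
  have hB : insert s(u, a) (A2.erase s(a, y)) \ A1 = (A2 \ A1).erase s(a, y) := by
    ext f
    by_cases hfe : f = s(u, a) <;> simp_all [and_assoc]
  have hRy := degE_erase_add he y
  have hBy := degE_erase_add hg y
  rw [degE_singleton_of_notMem hyu] at hRy
  rw [degE_singleton_of_mem (Sym2.mem_mk_right a y) (hE _ (h2.1.1 hg2))] at hBy
  rw [hR, hB]
  have := hmin.degE_sdiff_le hE h2 y
  omega

theorem IsMinimalImprovement.exists_isAugmentingTrail (hE : ∀ e ∈ E, ¬ e.IsDiag)
    (hmin : IsMinimalImprovement E A1 A2) (h2 : IsTriangleFreeTwoMatching E A2)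
    (hu : degE (A2 \ A1) u < degE (A1 \ A2) u) :
    ∃ a t, s(u, a) ∈ A1 \ A2 ∧ IsAugmentingTrail E A1 A2 (u :: a :: t) := by
  induction hn : #(symmDiffE A1 A2) using Nat.strong_induction_on generalizing A2 u with
  | _ n ih =>
  obtain ⟨a, he, hins | ⟨y, hg, hswap⟩⟩ := exists_insert_or_swap hE hmin.1 h2 hu
  · exact ⟨a, [], he, isAugmentingTrail_pair he hins⟩
  obtain ⟨a', t, he', hp⟩ := ih _ (hn ▸ card_lt_card (symmDiffE_insert_erase_ssubset he hg))
    (hmin.swap he hg) hswap (hmin.degE_sdiff_lt_of_swap hE h2 he hg) rfl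
  exact ⟨a, y :: a' :: t, he, hp.cons_cons he hg (mem_sdiff.mp he').1⟩

lemma IsAugmentingTrail.of_symmDiffE_subset {B : Finset (Sym2 V)} {p : List V}
    (hp : IsAugmentingTrail E B A2 p) (hB : symmDiffE B A2 ⊆ symmDiffE A1 A2) :
    IsAugmentingTrail E A1 A2 p := by
  obtain ⟨halt, hsub, hrest⟩ := hp
  have hiff : ∀ f ∈ edgesOf p, f ∈ B ↔ f ∈ A1 := fun f hf => by
    have h1 := hsub hf
    have h2 := hB h1
    simp only [mem_symmDiffE] at h1 h2
    tauto
  exact ⟨halt.congr hiff fun _ _ => Iff.rfl, hsub.trans hB, hrest⟩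

/-- if `|A1| > |A2|` for triangle-free 2-matchings in a simple
graph, then some alternating trail inside `A1 △ A2` augments `A2`. -/
theorem stmt_15 (E : Finset (Sym2 V)) (hE : ∀ e ∈ E, ¬ e.IsDiag)
    (A1 A2 : Finset (Sym2 V))
    (h1 : IsTwoMatching E A1) (h1t : TriangleFree A1)
    (h2 : IsTwoMatching E A2) (h2t : TriangleFree A2)
    (hlt : A2.card < A1.card) :
    ∃ p : List V, IsAltTrail A1 A2 p ∧ edgesOf p ⊆ symmDiffE A1 A2 ∧
      IsTwoMatching E (symmDiffE A2 (edgesOf p)) ∧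
      TriangleFree (symmDiffE A2 (edgesOf p)) ∧
      (symmDiffE A2 (edgesOf p)).card = A2.card + 1 := by
  obtain ⟨B, hB, hmin⟩ := exists_isMinimalImprovement ⟨h1, h1t⟩ hlt
  obtain ⟨u, hu⟩ := exists_degE_sdiff_lt (fun e he => hE e (hmin.1.1.1 he))
    (fun e he => hE e (h2.1 he)) hmin.2.1
  obtain ⟨a, t, -, hp⟩ := hmin.exists_isAugmentingTrail hE ⟨h2, h2t⟩ hu
  exact ⟨u :: a :: t, hp.of_symmDiffE_subset hB⟩
end
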